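/- The map ψ : D → B defined by x·ψ(d) = τ(x·d) is a bounded B-bimodule linear map, i.e., ψ(b d) = b ψ(d) and ψ(d b) = ψ(d) b for all b ∈ B, d ∈ D, and ‖ψ‖ ≤ ‖τ‖. -/

import Mathlib

/-- A pair `(X, Y)` implementing a strong Morita equivalence of unital inclusions
`A ⊆ C` and `B ⊆ D` of unital C*-algebras: `Y` is a `C`–`D`-equivalence bimodule and
`X` is a closed subspace of `Y` which is an `A`–`B`-equivalence bimodule with the
restricted actions and inner products. -/
structure MoritaPair
    (A : Type*) [NormedRing A] [StarRing A] [CStarRing A] [NormedAlgebra ℂ A]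
      [CompleteSpace A] [StarModule ℂ A]
    (C : Type*) [NormedRing C] [StarRing C] [CStarRing C] [NormedAlgebra ℂ C]
      [CompleteSpace C] [StarModule ℂ C]
    (B : Type*) [NormedRing B] [StarRing B] [CStarRing B] [NormedAlgebra ℂ B]
      [CompleteSpace B] [StarModule ℂ B]
    (D : Type*) [NormedRing D] [StarRing D] [CStarRing D] [NormedAlgebra ℂ D]
      [CompleteSpace D] [StarModule ℂ D]
    (X : Type*) [NormedAddCommGroup X] [NormedSpace ℂ X]
    (Y : Type*) [NormedAddCommGroup Y] [NormedSpace ℂ Y] [CompleteSpace Y] where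
  /-- the unital isometric *-embedding of `A` into `C` -/
  ιA : A →⋆ₐ[ℂ] C
  /-- the unital isometric *-embedding of `B` into `D` -/
  ιB : B →⋆ₐ[ℂ] D
  ιA_isometry : Isometry ιA
  ιB_isometry : Isometry ιB
  /-- the inclusion of the closed subspace `X` into `Y` -/
  incl : X →ₗ[ℂ] Y
  incl_norm : ∀ x, ‖incl x‖ = ‖x‖
  incl_closed : IsClosed (Set.range incl)
  /-- left action of `C` on `Y` -/
  lC : C → Y → Y
  lC_one : ∀ y, lC 1 y = y
  lC_mul : ∀ c c' y, lC (c * c') y = lC c (lC c' y)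
  lC_add_right : ∀ c y y', lC c (y + y') = lC c y + lC c y'
  lC_add_left : ∀ c c' y, lC (c + c') y = lC c y + lC c' y
  lC_smul : ∀ (z : ℂ) c y, lC (z • c) y = z • lC c y
  /-- right action of `D` on `Y` -/
  rD : Y → D → Y
  rD_one : ∀ y, rD y 1 = y
  rD_mul : ∀ y d d', rD y (d * d') = rD (rD y d) d'
  rD_add_left : ∀ y y' d, rD (y + y') d = rD y d + rD y' d
  rD_add_right : ∀ y d d', rD y (d + d') = rD y d + rD y d'
  rD_smul : ∀ (z : ℂ) y d, rD y (z • d) = z • rD y d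
  smul_assoc : ∀ c y d, rD (lC c y) d = lC c (rD y d)
  /-- the left `C`-valued inner product on `Y` -/
  innC : Y → Y → C
  innC_add_left : ∀ y y' z, innC (y + y') z = innC y z + innC y' z
  innC_star : ∀ y z, star (innC y z) = innC z y
  innC_lC : ∀ c y z, innC (lC c y) z = c * innC y z
  innC_norm : ∀ y, ‖innC y y‖ = ‖y‖ ^ 2
  /-- the right `D`-valued inner product on `Y` -/
  innD : Y → Y → D
  innD_add_right : ∀ y z z', innD y (z + z') = innD y z + innD y z'
  innD_star : ∀ y z, star (innD y z) = innD z y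
  innD_rD : ∀ y z d, innD y (rD z d) = innD y z * d
  innD_norm : ∀ y, ‖innD y y‖ = ‖y‖ ^ 2
  imprimitivity : ∀ y z w, lC (innC y z) w = rD y (innD z w)
  innC_full : (Submodule.span ℂ {c : C | ∃ y z, innC y z = c}).topologicalClosure = ⊤
  innD_full : (Submodule.span ℂ {d : D | ∃ y z, innD y z = d}).topologicalClosure = ⊤
  /-- left action of `A` on `X`, the restriction of the `C`-action -/
  lA : A → X → X
  lA_compat : ∀ a x, incl (lA a x) = lC (ιA a) (incl x)
  /-- right action of `B` on `X`, the restriction of the `D`-action -/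
  rB : X → B → X
  rB_compat : ∀ x b, incl (rB x b) = rD (incl x) (ιB b)
  /-- the left `A`-valued inner product on `X`, the restriction of `innC` -/
  innA : X → X → A
  innA_compat : ∀ x z, ιA (innA x z) = innC (incl x) (incl z)
  /-- the right `B`-valued inner product on `X`, the restriction of `innD` -/
  innB : X → X → B
  innB_compat : ∀ x z, ιB (innB x z) = innD (incl x) (incl z)
  innA_full : (Submodule.span ℂ {a : A | ∃ x z, innA x z = a}).topologicalClosure = ⊤
  innB_full : (Submodule.span ℂ {b : B | ∃ x z, innB x z = b}).topologicalClosure = ⊤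

variable {A : Type*} [NormedRing A] [StarRing A] [CStarRing A] [NormedAlgebra ℂ A]
  [CompleteSpace A] [StarModule ℂ A]
variable {C : Type*} [NormedRing C] [StarRing C] [CStarRing C] [NormedAlgebra ℂ C]
  [CompleteSpace C] [StarModule ℂ C]
variable {B : Type*} [NormedRing B] [StarRing B] [CStarRing B] [NormedAlgebra ℂ B]
  [CompleteSpace B] [StarModule ℂ B]
variable {D : Type*} [NormedRing D] [StarRing D] [CStarRing D] [NormedAlgebra ℂ D]
  [CompleteSpace D] [StarModule ℂ D]
variable {X : Type*} [NormedAddCommGroup X] [NormedSpace ℂ X]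
variable {Y : Type*} [NormedAddCommGroup Y] [NormedSpace ℂ Y] [CompleteSpace Y]

/-!
Acting on an arbitrary `x ∈ X` reduces everything to properties of `τ` and of the right action
of `B` on `X`: the two module identities follow from `(x b) d = x (b d)` and from the right
`B`-linearity of `τ`, which holds because `⟨y b, x⟩_C = ⟨y, x b*⟩_C` and `⟨·, ·⟩_A` is
nondegenerate. For the norm bound, `‖x ψ(d)‖ = ‖τ(x d)‖ ≤ ‖τ‖ ‖x‖ ‖d‖`, so it suffices that
`b ↦ (x ↦ x b)` is isometric, i.e. `‖b‖ ≤ ‖x ↦ x b‖`.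

The axioms do not make `⟨x, x⟩_B` positive, so there is no Cauchy–Schwarz inequality; a
polarization bound plus density of the span of `⟨X, X⟩_B` still give `‖b‖ ≤ K ‖x ↦ x b‖`.
For self-adjoint `b` the C*-identity `‖b ^ 2 ^ n‖ = ‖b‖ ^ 2 ^ n` improves this to `K = 1`,
the self-adjoint element `b ⟨x, x⟩_B b*` then bounds `‖x ↦ x b*‖` by `‖x ↦ x b‖`, and
`‖b‖² = ‖b* b‖` finishes.
-/

lemma le_of_forall_pow_two_pow_le_mul {a b K : ℝ} (hb : 0 ≤ b)
    (h : ∀ n : ℕ, a ^ 2 ^ n ≤ K * b ^ 2 ^ n) : a ≤ b := by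
  by_contra! hba
  rcases hb.eq_or_lt with rfl | hb
  · simpa [hba.not_ge] using h 0
  · have hr : 1 < a / b := (one_lt_div hb).mpr hba
    obtain ⟨n, hn⟩ := pow_unbounded_of_one_lt K hr
    have : (a / b) ^ 2 ^ n ≤ K := by
      rw [div_pow, div_le_iff₀ (by positivity)]
      exact h n
    have := pow_le_pow_right₀ hr.le (Nat.lt_two_pow_self (n := n)).le
    linarith

lemma IsSelfAdjoint.norm_le_of_forall_norm_le_mul {R : Type*} [NormedRing R] [StarRing R]
    [CStarRing R] {p : R → ℝ} (hp0 : ∀ c, 0 ≤ p c) (hmul : ∀ c c', p (c * c') ≤ p c * p c')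
    {K : ℝ} (hK : ∀ c, ‖c‖ ≤ K * p c) {c : R} (hc : IsSelfAdjoint c) : ‖c‖ ≤ p c := by
  have hpow : ∀ n : ℕ, p (c ^ 2 ^ n) ≤ p c ^ 2 ^ n := by
    intro n
    induction n with
    | zero => simp
    | succ n ih =>
      rw [pow_succ, pow_mul, sq, pow_mul, sq]
      exact (hmul _ _).trans (mul_le_mul ih ih (hp0 _) (pow_nonneg (hp0 c) _))
  refine le_of_forall_pow_two_pow_le_mul (hp0 c) (K := max K 0) fun n => ?_
  calc ‖c‖ ^ 2 ^ n = ‖c ^ 2 ^ n‖ := (hc.norm_pow_two_pow n).symm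
    _ ≤ K * p (c ^ 2 ^ n) := hK _
    _ ≤ max K 0 * p c ^ 2 ^ n :=
        mul_le_mul (le_max_left _ _) (hpow n) (hp0 _) (le_max_right _ _)

section DenseSpan

variable {𝕜 R : Type*} [NormedField 𝕜] [NormedRing R] [NormedAlgebra 𝕜 R]

lemma exists_norm_mul_le_of_mem_span {S : Set R} {p : R → ℝ}
    (hS : ∀ s ∈ S, ∃ K, ∀ c, ‖s * c‖ ≤ K * p c) {g : R} (hg : g ∈ Submodule.span 𝕜 S) :
    ∃ K, ∀ c, ‖g * c‖ ≤ K * p c := by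
  induction hg using Submodule.span_induction with
  | mem s hs => exact hS s hs
  | zero => exact ⟨0, fun c => by simp⟩
  | add g g' _ _ ih ih' =>
    obtain ⟨K, hK⟩ := ih
    obtain ⟨K', hK'⟩ := ih'
    refine ⟨K + K', fun c => ?_⟩
    rw [add_mul, add_mul]
    exact (norm_add_le _ _).trans (add_le_add (hK c) (hK' c))
  | smul a g _ ih =>
    obtain ⟨K, hK⟩ := ih
    refine ⟨‖a‖ * K, fun c => ?_⟩
    rw [smul_mul_assoc, norm_smul, mul_assoc]
    gcongr
    exact hK c

lemma exists_norm_le_mul_of_dense_span {S : Set R} (hS : Dense (Submodule.span 𝕜 S : Set R))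
    {p : R → ℝ} (hSp : ∀ s ∈ S, ∃ K, ∀ c, ‖s * c‖ ≤ K * p c) : ∃ K, ∀ c, ‖c‖ ≤ K * p c := by
  -- with `v` in the span and `‖1 - v‖ < 1/2`, the part `(1 - v) c` absorbs half of `‖c‖`
  obtain ⟨v, hv, hv1⟩ := Metric.mem_closure_iff.mp (hS 1) (1 / 2) (by norm_num)
  rw [dist_eq_norm] at hv1
  obtain ⟨K, hK⟩ := exists_norm_mul_le_of_mem_span hSp hv
  refine ⟨2 * K, fun c => ?_⟩
  have : ‖c‖ ≤ 1 / 2 * ‖c‖ + K * p c := calc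
    ‖c‖ = ‖(1 - v) * c + v * c‖ := by rw [sub_mul, one_mul, sub_add_cancel]
    _ ≤ ‖1 - v‖ * ‖c‖ + K * p c :=
        (norm_add_le _ _).trans (add_le_add (norm_mul_le _ _) (hK c))
    _ ≤ 1 / 2 * ‖c‖ + K * p c := by gcongr
  linarith

end DenseSpan

section Polarization

variable {E F : Type*} [NormedAddCommGroup E] [NormedSpace ℂ E]
  [NormedAddCommGroup F] [NormedSpace ℂ F] (f : E →ₗ⋆[ℂ] E →ₗ[ℂ] F)

lemma LinearMap.norm_apply_add_apply_swap_le (hf : ∀ x, ‖f x x‖ ≤ ‖x‖ ^ 2) (x w : E) :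
    ‖f x w + f w x‖ ≤ 2 * (‖x‖ + ‖w‖) ^ 2 := by
  have hexp : f x w + f w x = f (x + w) (x + w) - f x x - f w w := by
    simp only [map_add, LinearMap.add_apply]
    abel
  have hxw := norm_add_le x w
  calc ‖f x w + f w x‖ ≤ ‖f (x + w) (x + w)‖ + ‖f x x‖ + ‖f w w‖ := by
        rw [hexp]; exact norm_sub_le_of_le (norm_sub_le _ _) le_rfl
    _ ≤ ‖x + w‖ ^ 2 + ‖x‖ ^ 2 + ‖w‖ ^ 2 := by gcongr <;> apply hf
    _ ≤ 2 * (‖x‖ + ‖w‖) ^ 2 := by nlinarith [norm_nonneg x, norm_nonneg w, norm_nonneg (x + w)]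

lemma LinearMap.norm_apply_apply_le_of_norm_apply_self_le (hf : ∀ x, ‖f x x‖ ≤ ‖x‖ ^ 2)
    (x w : E) : ‖f x w‖ ≤ 2 * (‖x‖ + ‖w‖) ^ 2 := by
  have hpolar : (2 : ℂ) • f x w
      = (f x w + f w x) + (-Complex.I) • (f x (Complex.I • w) + f (Complex.I • w) x) := by
    simp only [map_smul, map_smulₛₗ, LinearMap.smul_apply, Complex.conj_I]
    rw [smul_add, smul_smul, smul_smul, neg_mul_neg, Complex.I_mul_I, neg_mul, Complex.I_mul_I]
    module
  have h1 := f.norm_apply_add_apply_swap_le hf x w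
  have h2 := f.norm_apply_add_apply_swap_le hf x (Complex.I • w)
  rw [norm_smul, Complex.norm_I, one_mul] at h2
  have := norm_add_le (f x w + f w x)
    ((-Complex.I) • (f x (Complex.I • w) + f (Complex.I • w) x))
  rw [← hpolar, norm_smul, norm_smul, norm_neg, Complex.norm_I, one_mul,
    Complex.norm_ofNat] at this
  linarith

lemma LinearMap.exists_norm_apply_apply_le (hf : ∀ x, ‖f x x‖ ≤ ‖x‖ ^ 2) (x : E) :
    ∃ C, 0 ≤ C ∧ ∀ w, ‖f x w‖ ≤ C * ‖w‖ := by
  obtain ⟨C, hC⟩ := LinearMap.bound_of_ball_bound one_pos (2 * (‖x‖ + 1) ^ 2) (f x)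
    fun w hw => (f.norm_apply_apply_le_of_norm_apply_self_le hf x w).trans <| by
      rw [mem_ball_zero_iff] at hw
      gcongr
  exact ⟨max C 0, le_max_right _ _, fun w => (hC w).trans (by gcongr; exact le_max_left _ _)⟩

end Polarization

namespace MoritaPair

variable (M : MoritaPair A C B D X Y)

lemma incl_injective : Function.Injective M.incl := fun x x' h => by
  rw [← sub_eq_zero, ← norm_eq_zero, ← M.incl_norm, map_sub, h, sub_self, norm_zero]

lemma norm_ιB (b : B) : ‖M.ιB b‖ = ‖b‖ := M.ιB_isometry.norm_map_of_map_zero (map_zero _) b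

lemma dense_span_innC : Dense (Submodule.span ℂ {c : C | ∃ y z, M.innC y z = c} : Set C) :=
  Submodule.dense_iff_topologicalClosure_eq_top.mpr M.innC_full

lemma dense_span_innB : Dense (Submodule.span ℂ {b : B | ∃ x z, M.innB x z = b} : Set B) :=
  Submodule.dense_iff_topologicalClosure_eq_top.mpr M.innB_full

lemma rD_smul_left (z : ℂ) (y : Y) (d : D) : M.rD (z • y) d = z • M.rD y d :=
  calc M.rD (z • y) d = M.rD (M.rD y (z • 1)) d := by rw [M.rD_smul, M.rD_one]
    _ = z • M.rD y d := by rw [← M.rD_mul, smul_one_mul, M.rD_smul]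

lemma rD_sub_right (y : Y) (d d' : D) : M.rD y (d - d') = M.rD y d - M.rD y d' :=
  (AddMonoidHom.mk' (M.rD y) (M.rD_add_right y)).map_sub d d'

lemma innD_smul_right (z : ℂ) (y w : Y) : M.innD y (z • w) = z • M.innD y w :=
  calc M.innD y (z • w) = M.innD y (M.rD w (z • 1)) := by rw [M.rD_smul, M.rD_one]
    _ = z • M.innD y w := by rw [M.innD_rD, mul_smul_one]

lemma innD_add_left (y y' w : Y) : M.innD (y + y') w = M.innD y w + M.innD y' w := by
  rw [← M.innD_star w, M.innD_add_right, star_add, M.innD_star, M.innD_star]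

lemma innD_smul_left (z : ℂ) (y w : Y) : M.innD (z • y) w = star z • M.innD y w := by
  rw [← M.innD_star w, M.innD_smul_right, star_smul, M.innD_star]

lemma innD_rD_left (y w : Y) (d : D) : M.innD (M.rD y d) w = star d * M.innD y w := by
  rw [← M.innD_star w, M.innD_rD, star_mul, M.innD_star]

lemma norm_rD_le (y : Y) (d : D) : ‖M.rD y d‖ ≤ ‖y‖ * ‖d‖ := by
  refine (pow_le_pow_iff_left₀ (norm_nonneg _) (by positivity) two_ne_zero).mp ?_
  calc ‖M.rD y d‖ ^ 2 = ‖star d * (M.innD y y * d)‖ := by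
        rw [← M.innD_norm, M.innD_rD_left, M.innD_rD]
    _ ≤ ‖d‖ * (‖y‖ ^ 2 * ‖d‖) := by
        grw [norm_mul_le, norm_mul_le, norm_star, M.innD_norm]
    _ = (‖y‖ * ‖d‖) ^ 2 := by ring

lemma innC_sub_left (y y' w : Y) : M.innC (y - y') w = M.innC y w - M.innC y' w :=
  (AddMonoidHom.mk' (M.innC · w) (M.innC_add_left · · w)).map_sub y y'

lemma eq_of_forall_lC_eq {c c' : C} (h : ∀ y, M.lC c y = M.lC c' y) : c = c' := by
  have hmul : ContinuousLinearMap.mul ℂ C c = ContinuousLinearMap.mul ℂ C c' := by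
    refine ContinuousLinearMap.ext_on M.dense_span_innC ?_
    rintro _ ⟨y, z, rfl⟩
    simp only [ContinuousLinearMap.mul_apply']
    rw [← M.innC_lC, ← M.innC_lC, h]
  simpa using congr($hmul 1)

lemma innC_rD_left (y z : Y) (d : D) : M.innC (M.rD y d) z = M.innC y (M.rD z (star d)) :=
  M.eq_of_forall_lC_eq fun w => by
    rw [M.imprimitivity, M.imprimitivity, ← M.rD_mul, M.innD_rD_left, star_star, M.rD_mul]

lemma rB_add_left (x x' : X) (b : B) : M.rB (x + x') b = M.rB x b + M.rB x' b :=
  M.incl_injective <| by simp only [map_add, M.rB_compat, M.rD_add_left]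

lemma rB_smul_left (z : ℂ) (x : X) (b : B) : M.rB (z • x) b = z • M.rB x b :=
  M.incl_injective <| by simp only [map_smul, M.rB_compat, M.rD_smul_left]

lemma rB_mul (x : X) (b b' : B) : M.rB x (b * b') = M.rB (M.rB x b) b' :=
  M.incl_injective <| by simp only [M.rB_compat, map_mul, M.rD_mul]

lemma norm_rB_le (x : X) (b : B) : ‖M.rB x b‖ ≤ ‖x‖ * ‖b‖ := by
  rw [← M.incl_norm, M.rB_compat, ← M.incl_norm x, ← M.norm_ιB b]
  exact M.norm_rD_le _ _

lemma innB_add_left (x x' w : X) : M.innB (x + x') w = M.innB x w + M.innB x' w :=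
  M.ιB_isometry.injective <| by simp only [map_add, M.innB_compat, M.innD_add_left]

lemma innB_add_right (x w w' : X) : M.innB x (w + w') = M.innB x w + M.innB x w' :=
  M.ιB_isometry.injective <| by simp only [map_add, M.innB_compat, M.innD_add_right]

lemma innB_smul_left (z : ℂ) (x w : X) : M.innB (z • x) w = star z • M.innB x w :=
  M.ιB_isometry.injective <| by simp only [map_smul, M.innB_compat, M.innD_smul_left]

lemma innB_smul_right (z : ℂ) (x w : X) : M.innB x (z • w) = z • M.innB x w :=
  M.ιB_isometry.injective <| by simp only [map_smul, M.innB_compat, M.innD_smul_right]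

lemma innB_rB_right (x w : X) (b : B) : M.innB x (M.rB w b) = M.innB x w * b :=
  M.ιB_isometry.injective <| by simp only [map_mul, M.innB_compat, M.rB_compat, M.innD_rD]

lemma innB_rB_left (x w : X) (b : B) : M.innB (M.rB x b) w = star b * M.innB x w :=
  M.ιB_isometry.injective <| by
    simp only [map_mul, map_star, M.innB_compat, M.rB_compat, M.innD_rD_left]

lemma isSelfAdjoint_innB_self (x : X) : IsSelfAdjoint (M.innB x x) :=
  M.ιB_isometry.injective <| by rw [map_star, M.innB_compat, M.innD_star]

lemma norm_innB_self (x : X) : ‖M.innB x x‖ = ‖x‖ ^ 2 := by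
  rw [← M.norm_ιB, M.innB_compat, M.innD_norm, M.incl_norm]

noncomputable def innBₛₗ : X →ₗ⋆[ℂ] X →ₗ[ℂ] B :=
  LinearMap.mk₂'ₛₗ _ _ M.innB M.innB_add_left M.innB_smul_left M.innB_add_right
    M.innB_smul_right

noncomputable def rBCLM (b : B) : X →L[ℂ] X :=
  LinearMap.mkContinuous ⟨⟨(M.rB · b), (M.rB_add_left · · b)⟩, (M.rB_smul_left · · b)⟩ ‖b‖
    fun x => (M.norm_rB_le x b).trans_eq (mul_comm _ _)

@[simp]
lemma rBCLM_apply (b : B) (x : X) : M.rBCLM b x = M.rB x b := rfl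

lemma norm_rBCLM_le (b : B) : ‖M.rBCLM b‖ ≤ ‖b‖ :=
  LinearMap.mkContinuous_norm_le _ (norm_nonneg b) _

lemma norm_rBCLM_mul_le (b b' : B) : ‖M.rBCLM (b * b')‖ ≤ ‖M.rBCLM b‖ * ‖M.rBCLM b'‖ := by
  have : M.rBCLM (b * b') = (M.rBCLM b').comp (M.rBCLM b) := by
    ext x
    simp [M.rB_mul]
  rw [this, mul_comm]
  exact ContinuousLinearMap.opNorm_comp_le _ _

lemma exists_norm_le_mul_norm_rBCLM : ∃ K, ∀ b : B, ‖b‖ ≤ K * ‖M.rBCLM b‖ := by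
  refine exists_norm_le_mul_of_dense_span M.dense_span_innB ?_
  rintro _ ⟨x, z, rfl⟩
  obtain ⟨K, hK0, hK⟩ :=
    M.innBₛₗ.exists_norm_apply_apply_le (fun x => (M.norm_innB_self x).le) x
  refine ⟨K * ‖z‖, fun b => ?_⟩
  calc ‖M.innB x z * b‖ = ‖M.innB x (M.rBCLM b z)‖ := by rw [M.rBCLM_apply, M.innB_rB_right]
    _ ≤ K * ‖M.rBCLM b z‖ := hK _
    _ ≤ K * (‖M.rBCLM b‖ * ‖z‖) := by grw [(M.rBCLM b).le_opNorm z]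
    _ = K * ‖z‖ * ‖M.rBCLM b‖ := by ring

lemma norm_le_norm_rBCLM_of_isSelfAdjoint {b : B} (hb : IsSelfAdjoint b) :
    ‖b‖ ≤ ‖M.rBCLM b‖ :=
  have ⟨_, hK⟩ := M.exists_norm_le_mul_norm_rBCLM
  hb.norm_le_of_forall_norm_le_mul (fun _ => norm_nonneg _) M.norm_rBCLM_mul_le hK

lemma norm_rBCLM_star_le (b : B) : ‖M.rBCLM (star b)‖ ≤ ‖M.rBCLM b‖ := by
  set α := ‖M.rBCLM b‖
  set β := ‖M.rBCLM (star b)‖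
  -- `‖x b*‖² = ‖b ⟨x, x⟩ b*‖` and `b ⟨x, x⟩ b*` is self-adjoint
  have hβ : β ≤ √(α * β) := by
    refine ContinuousLinearMap.opNorm_le_bound _ (Real.sqrt_nonneg _) fun x => ?_
    refine (pow_le_pow_iff_left₀ (norm_nonneg _) (by positivity) two_ne_zero).mp ?_
    calc ‖M.rBCLM (star b) x‖ ^ 2 = ‖b * M.innB x x * star b‖ := by
          rw [M.rBCLM_apply, ← M.norm_innB_self, M.innB_rB_left, M.innB_rB_right, star_star,
            mul_assoc]
      _ ≤ ‖M.rBCLM (b * M.innB x x * star b)‖ :=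
          M.norm_le_norm_rBCLM_of_isSelfAdjoint ((M.isSelfAdjoint_innB_self x).conjugate b)
      _ ≤ α * ‖x‖ ^ 2 * β := by
          grw [M.norm_rBCLM_mul_le, M.norm_rBCLM_mul_le, M.norm_rBCLM_le (M.innB x x),
            M.norm_innB_self]
      _ = (√(α * β) * ‖x‖) ^ 2 := by
          rw [mul_pow, Real.sq_sqrt (by positivity)]; ring
  nlinarith [Real.sq_sqrt (by positivity : 0 ≤ α * β), Real.sqrt_nonneg (α * β),
    norm_nonneg (M.rBCLM b)]

lemma norm_le_norm_rBCLM (b : B) : ‖b‖ ≤ ‖M.rBCLM b‖ := by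
  refine (pow_le_pow_iff_left₀ (norm_nonneg _) (norm_nonneg _) two_ne_zero).mp ?_
  calc ‖b‖ ^ 2 = ‖star b * b‖ := by rw [CStarRing.norm_star_mul_self, sq]
    _ ≤ ‖M.rBCLM (star b * b)‖ :=
        M.norm_le_norm_rBCLM_of_isSelfAdjoint (IsSelfAdjoint.star_mul_self b)
    _ ≤ ‖M.rBCLM b‖ ^ 2 := by grw [M.norm_rBCLM_mul_le, M.norm_rBCLM_star_le, sq]

lemma eq_of_forall_rB_eq {b b' : B} (h : ∀ x, M.rB x b = M.rB x b') : b = b' := by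
  have h0 : M.rBCLM (b - b') = 0 := by
    ext x
    refine M.incl_injective ?_
    rw [M.rBCLM_apply, M.rB_compat, map_sub, M.rD_sub_right, ← M.rB_compat, ← M.rB_compat, h,
      sub_self, zero_apply, map_zero]
  simpa [h0, sub_eq_zero] using M.norm_le_norm_rBCLM (b - b')

lemma eq_of_forall_innA_eq {u u' : X} (h : ∀ x, M.innA u x = M.innA u' x) : u = u' := by
  have h0 (w : X) : M.innC (M.incl (u - u')) (M.incl w) = 0 := by
    rw [map_sub, M.innC_sub_left, ← M.innA_compat, ← M.innA_compat, h, sub_self]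
  rw [← sub_eq_zero, ← norm_eq_zero, ← M.incl_norm, ← sq_eq_zero_iff, ← M.innC_norm, h0,
    norm_zero]

lemma innA_rB_left (x w : X) (b : B) : M.innA (M.rB x b) w = M.innA x (M.rB w (star b)) :=
  M.ιA_isometry.injective <| by
    rw [M.innA_compat, M.innA_compat, M.rB_compat, M.rB_compat, M.innC_rD_left, map_star]

lemma map_rD_ιB_of_innA_eq (φ : C → A) {τ : Y → X}
    (hτ : ∀ y x, M.innA (τ y) x = φ (M.innC y (M.incl x))) (y : Y) (b : B) :
    τ (M.rD y (M.ιB b)) = M.rB (τ y) b :=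
  M.eq_of_forall_innA_eq fun x => by
    rw [hτ, M.innC_rD_left, ← map_star, ← M.rB_compat, ← hτ, M.innA_rB_left]

end MoritaPair

theorem stmt6_general (M : MoritaPair A C B D X Y) (φ : C →L[ℂ] A)
    (τ : Y →L[ℂ] X)
    (hτ : ∀ (y : Y) (x : X), M.innA (τ y) x = φ (M.innC y (M.incl x)))
    (ψ : D →ₗ[ℂ] B)
    (hψ : ∀ (x : X) (d : D), M.rB x (ψ d) = τ (M.rD (M.incl x) d)) :
    (∀ (b : B) (d : D), ψ (M.ιB b * d) = b * ψ d) ∧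
    (∀ (b : B) (d : D), ψ (d * M.ιB b) = ψ d * b) ∧
    (∀ d : D, ‖ψ d‖ ≤ ‖τ‖ * ‖d‖) := by
  refine ⟨fun b d => M.eq_of_forall_rB_eq fun x => ?_,
    fun b d => M.eq_of_forall_rB_eq fun x => ?_, fun d => ?_⟩
  · rw [hψ, M.rD_mul, ← M.rB_compat, ← hψ, M.rB_mul]
  · rw [hψ, M.rD_mul, M.map_rD_ιB_of_innA_eq φ hτ, ← hψ, M.rB_mul]
  · refine (M.norm_le_norm_rBCLM _).trans <|
      ContinuousLinearMap.opNorm_le_bound _ (by positivity) fun x => ?_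
    calc ‖M.rBCLM (ψ d) x‖ = ‖τ (M.rD (M.incl x) d)‖ := by rw [M.rBCLM_apply, hψ]
      _ ≤ ‖τ‖ * (‖M.incl x‖ * ‖d‖) := by grw [τ.le_opNorm, M.norm_rD_le]
      _ = ‖τ‖ * ‖d‖ * ‖x‖ := by rw [M.incl_norm]; ring

/-- the map `ψ : D → B` defined by `x·ψ(d) = τ(x·d)` is a bounded
`B`-bimodule linear map with `‖ψ‖ ≤ ‖τ‖`. -/
theorem stmt6 (M : MoritaPair A C B D X Y) (φ : C →L[ℂ] A)
    (hφ : ∀ (a : A) (c : C), φ (M.ιA a * c) = a * φ c ∧ φ (c * M.ιA a) = φ c * a)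
    (τ : Y →L[ℂ] X)
    (hτ : ∀ (y : Y) (x : X), M.innA (τ y) x = φ (M.innC y (M.incl x)))
    (ψ : D →ₗ[ℂ] B)
    (hψ : ∀ (x : X) (d : D), M.rB x (ψ d) = τ (M.rD (M.incl x) d)) :
    (∀ (b : B) (d : D), ψ (M.ιB b * d) = b * ψ d) ∧
    (∀ (b : B) (d : D), ψ (d * M.ιB b) = ψ d * b) ∧
    (∀ d : D, ‖ψ d‖ ≤ ‖τ‖ * ‖d‖) :=
  stmt6_general M φ τ hτ ψ hψ
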